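/- For every tournament T, the tournament hypergraph H(T), whose vertices are those of T and whose edges are the vertex sets of cyclically oriented triangles of T, contains no copy of K_4^{(3)-} (four vertices carrying three edges). -/

import Mathlib

/-!
Three distinct triples of a four-element set all contain the fourth vertex `v` left out by
none of them, and together they cover all three pairs of the other vertices. In a cyclic
triangle through `v`, the vertex `v` beats exactly one of the two others. So on each of the
three pairs, "beaten by `v`" takes different truth values, which is impossible for three
vertices and two truth values.
-/

/-- `s` is an edge of the tournament hypergraph of the tournament `r`, i.e. the vertex
set of a cyclically oriented triangle. -/
def CyclicTriangle {α : Type*} [DecidableEq α] (r : α → α → Prop) (s : Finset α) : Prop :=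
  ∃ u v w : α, s = {u, v, w} ∧ r u v ∧ r v w ∧ r w u

theorem Finset.exists_eq_compl_singleton {α : Type*} [Fintype α] [DecidableEq α] {s : Finset α}
    (hs : s.card + 1 = Fintype.card α) : ∃ a, s = {a}ᶜ := by
  obtain ⟨a, ha⟩ := Finset.card_eq_one.mp (show sᶜ.card = 1 by rw [Finset.card_compl]; omega)
  exact ⟨a, by rw [← ha, compl_compl]⟩

theorem Fin.exists_compl_singleton_eq_insert (a b c : Fin 4) (hab : a ≠ b) (hac : a ≠ c)
    (hbc : b ≠ c) : ∃ v, v ≠ a ∧ v ≠ b ∧ v ≠ c ∧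
      {a}ᶜ = ({v, b, c} : Finset (Fin 4)) ∧ {b}ᶜ = ({v, a, c} : Finset (Fin 4)) ∧
      {c}ᶜ = ({v, a, b} : Finset (Fin 4)) := by
  revert a b c
  decide

namespace CyclicTriangle

variable {α : Type*} [DecidableEq α] {r : α → α → Prop}

theorem cases {v a b : α} (hva : v ≠ a) (hvb : v ≠ b) (hab : a ≠ b)
    (h : CyclicTriangle r {v, a, b}) :
    (r v a ∧ r a b ∧ r b v) ∨ (r v b ∧ r b a ∧ r a v) := by
  obtain ⟨u, w, z, hs, huw, hwz, hzu⟩ := h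
  have mem : ∀ y ∈ ({v, a, b} : Finset α), y = u ∨ y = w ∨ y = z := fun y hy => by
    simpa [hs] using hy
  rcases mem v (by simp) with rfl | rfl | rfl <;>
    rcases mem a (by simp) with rfl | rfl | rfl <;>
    rcases mem b (by simp) with rfl | rfl | rfl <;>
    simp_all

theorem rel_iff_not_rel (hasymm : ∀ x y, x ≠ y → r x y → ¬ r y x) {v a b : α}
    (hva : v ≠ a) (hvb : v ≠ b) (hab : a ≠ b) (h : CyclicTriangle r {v, a, b}) :
    r v a ↔ ¬ r v b := by
  rcases h.cases hva hvb hab with ⟨hva', -, hbv⟩ | ⟨hvb', -, hav⟩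
  · exact iff_of_true hva' (hasymm b v hvb.symm hbv)
  · exact iff_of_false (hasymm a v hva.symm hav) (not_not.mpr hvb')

end CyclicTriangle

/-- Tournament hypergraphs contain no copy of `K₄^(3)-`: there are no four distinct
vertices carrying three distinct edges. -/
theorem tournament_hypergraph_K43minus_free {α : Type*} [DecidableEq α]
    (r : α → α → Prop) (htournament : ∀ x y : α, x ≠ y → (r x y ↔ ¬ r y x)) :
    ¬ ∃ (x : Fin 4 → α) (S : Fin 3 → Finset (Fin 4)),
      Function.Injective x ∧ Function.Injective S ∧ (∀ t, (S t).card = 3) ∧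
      (∀ t, CyclicTriangle r ((S t).image x)) := by
  rintro ⟨x, S, hx, hS, hcard, hcyc⟩
  choose m hm using fun t ↦
    Finset.exists_eq_compl_singleton (by simp [hcard t] : (S t).card + 1 = _)
  have hm_inj : Function.Injective m := fun t t' h ↦ hS (by rw [hm, hm, h])
  obtain ⟨v, hv0, hv1, hv2, h0, h1, h2⟩ := Fin.exists_compl_singleton_eq_insert (m 0) (m 1)
    (m 2) (hm_inj.ne (by decide)) (hm_inj.ne (by decide)) (hm_inj.ne (by decide))
  have beats_one (t : Fin 3) {a b : Fin 4} (hva : v ≠ a) (hvb : v ≠ b) (hab : a ≠ b)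
      (ht : S t = {v, a, b}) : r (x v) (x a) ↔ ¬ r (x v) (x b) := by
    have htri := hcyc t
    rw [ht, Finset.image_insert, Finset.image_insert, Finset.image_singleton] at htri
    exact htri.rel_iff_not_rel (fun y z hyz ↦ (htournament y z hyz).mp)
      (hx.ne hva) (hx.ne hvb) (hx.ne hab)
  have := beats_one 0 hv1 hv2 (hm_inj.ne (by decide)) (by rw [hm, h0])
  have := beats_one 1 hv0 hv2 (hm_inj.ne (by decide)) (by rw [hm, h1])
  have := beats_one 2 hv0 hv1 (hm_inj.ne (by decide)) (by rw [hm, h2])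
  tauto
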